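/- Backward optimality preservation: if a plan π' optimally solves the commit task P_c, then the mapped sequence ρ(π'), obtained by replacing each action of π' by its original counterpart, optimally solves the original STRIPS planning task P. -/

import Mathlib

/-- A STRIPS action: positive/negative preconditions, add/delete effects, nonnegative cost. -/
structure StripsAction (α : Type*) where
  prePos : Set α
  preNeg : Set α
  add : Set α
  del : Set α
  cost : NNReal

variable {α : Type*}

/-- An action is applicable in state `s` iff `pre⁺ ⊆ s` and `pre⁻ ∩ s = ∅`. -/
def StripsAction.Applicable (a : StripsAction α) (s : Set α) : Prop :=
  a.prePos ⊆ s ∧ a.preNeg ∩ s = ∅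

/-- Result of applying an action: `γ(s,a) = (s \ del(a)) ∪ add(a)`. -/
def StripsAction.apply (a : StripsAction α) (s : Set α) : Set α :=
  (s \ a.del) ∪ a.add

/-- `Γ(s, π)`: the state resulting from applying the sequence `π` in `s`. -/
def seqResult (s : Set α) : List (StripsAction α) → Set α
  | [] => s
  | a :: π => seqResult (a.apply s) π

/-- A sequence of actions is applicable in `s` if each action is applicable in the
state resulting from the previous ones. -/
def SeqApplicable (s : Set α) : List (StripsAction α) → Prop
  | [] => True
  | a :: π => a.Applicable s ∧ SeqApplicable (a.apply s) π

/-- Cost of a plan: sum of the costs of its actions. -/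
def planCost (π : List (StripsAction α)) : NNReal :=
  (π.map StripsAction.cost).sum

/-- A STRIPS planning task `P = ⟨F, A, I, G⟩`. -/
structure StripsTask (α : Type*) where
  F : Set α
  A : Set (StripsAction α)
  I : Set α
  G : Set α

/-- Well-formedness of a STRIPS planning task: `F` and `A` finite, `I ⊆ F`, `G ⊆ F`,
all action components within `F`, and `add(a) ∩ del(a) = ∅`. -/
def StripsTask.WellFormed (T : StripsTask α) : Prop :=
  T.F.Finite ∧ T.A.Finite ∧ T.I ⊆ T.F ∧ T.G ⊆ T.F ∧
    ∀ a ∈ T.A, a.prePos ⊆ T.F ∧ a.preNeg ⊆ T.F ∧ a.add ⊆ T.F ∧ a.del ⊆ T.F ∧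
      a.add ∩ a.del = ∅

/-- A plan for a task: a sequence of actions of the task, applicable in `I`,
whose result satisfies `G`. -/
def StripsTask.IsPlan (T : StripsTask α) (π : List (StripsAction α)) : Prop :=
  (∀ a ∈ π, a ∈ T.A) ∧ SeqApplicable T.I π ∧ T.G ⊆ seqResult T.I π

/-- A task is solvable if it has a plan. -/
def StripsTask.Solvable (T : StripsTask α) : Prop := ∃ π, T.IsPlan π

/-- An optimal plan: a plan of minimal cost among all plans. -/
def StripsTask.OptimalPlan (T : StripsTask α) (π : List (StripsAction α)) : Prop :=
  T.IsPlan π ∧ ∀ π₂, T.IsPlan π₂ → planCost π ≤ planCost π₂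

/-- Pending goals: `Ḡ = {g ∈ G \ I | ∃ a ∈ A, g ∈ add(a)}`. -/
def pending (T : StripsTask α) : Set α :=
  {g | g ∈ T.G \ T.I ∧ ∃ a ∈ T.A, g ∈ a.add}

/-- The map `g ↦ g-commit` introduces fresh fluents: it is injective on the pending
goals and its values on them avoid `F`. -/
def FreshCommit (T : StripsTask α) (commit : α → α) : Prop :=
  Set.InjOn commit (pending T) ∧ ∀ g ∈ pending T, commit g ∉ T.F

/-- Commit version of an action `a ∈ A^G` for a subset `i ⊆ add(a) ∩ Ḡ`. -/
def commitAction (commit : α → α) (a : StripsAction α) (i : Set α) : StripsAction α :=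
  ⟨a.prePos, a.preNeg ∪ commit '' i, a.add ∪ commit '' i, a.del, a.cost⟩

/-- Force-commit version of an action `a ∈ A^¬G`. -/
def forceCommitAction (commit : α → α) (Gbar : Set α) (a : StripsAction α) : StripsAction α :=
  ⟨a.prePos, a.preNeg ∪ commit '' (a.del ∩ Gbar), a.add, a.del, a.cost⟩

/-- Simultaneous version of an action `a ∈ A^G*` for a subset `j ⊆ add(a) ∩ Ḡ`. -/
def simAction (commit : α → α) (Gbar : Set α) (a : StripsAction α) (j : Set α) : StripsAction α :=
  ⟨a.prePos, a.preNeg ∪ commit '' j ∪ commit '' (a.del ∩ Gbar),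
    a.add ∪ commit '' j, a.del, a.cost⟩

/-- `CompiledFrom T commit a' a` holds iff `a'` is one of the actions of the commit
task built from the original action `a ∈ A`, i.e. `ρ(a') = a`. -/
def CompiledFrom (T : StripsTask α) (commit : α → α) (a' a : StripsAction α) : Prop :=
  a ∈ T.A ∧
    ((a.add ∩ pending T ≠ ∅ ∧ a.del ∩ pending T = ∅ ∧
        ∃ i ⊆ a.add ∩ pending T, a' = commitAction commit a i) ∨
     (a.add ∩ pending T = ∅ ∧ a.del ∩ pending T ≠ ∅ ∧
        a' = forceCommitAction commit (pending T) a) ∨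
     (a.add ∩ pending T ≠ ∅ ∧ a.del ∩ pending T ≠ ∅ ∧
        ∃ j ⊆ a.add ∩ pending T, a' = simAction commit (pending T) a j) ∨
     (a.add ∩ pending T = ∅ ∧ a.del ∩ pending T = ∅ ∧ a' = a))

/-- The commit planning task `P_c = ⟨F ∪ F', A_c, I, G_c⟩`. -/
def commitTask (T : StripsTask α) (commit : α → α) : StripsTask α :=
  ⟨T.F ∪ commit '' pending T,
   {a' | ∃ a, CompiledFrom T commit a' a},
   T.I,
   (T.G \ pending T) ∪ commit '' pending T⟩

/-!
Every action of the commit task is `simAction a j` for its original `a` and some set `j` of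
pending goals added by `a`, so it has the cost of `a`. Intersecting states with `F` turns a run
of `π'` into a run of `ρ(π')`; along that run a commit fluent `g-commit` can only be present
together with `g`, since the compiled actions that delete `g` require `g-commit` to be absent.
Hence `ρ(π')` is a plan. Conversely, every plan of `P` becomes a plan of `P_c` of the same cost
by committing each pending goal at its last achiever, the action after which no action adds or
deletes it. So `ρ(π')` costs no more than any plan of `P`.
-/

open Set List

theorem List.Forall₂.exists_of_mem_left {β γ : Type*} {R : β → γ → Prop} {l₁ : List β}
    {l₂ : List γ} (h : Forall₂ R l₁ l₂) {a : β} (ha : a ∈ l₁) : ∃ b ∈ l₂, R a b := by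
  induction h with
  | nil => simp at ha
  | cons hab _ ih =>
    rcases mem_cons.1 ha with rfl | ha
    · exact ⟨_, mem_cons_self, hab⟩
    · obtain ⟨b, hb, h⟩ := ih ha
      exact ⟨b, mem_cons_of_mem _ hb, h⟩

theorem List.Forall₂.exists_of_mem_right {β γ : Type*} {R : β → γ → Prop} {l₁ : List β}
    {l₂ : List γ} (h : Forall₂ R l₁ l₂) {b : γ} (hb : b ∈ l₂) : ∃ a ∈ l₁, R a b := by
  induction h with
  | nil => simp at hb
  | cons hab _ ih =>
    rcases mem_cons.1 hb with rfl | hb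
    · exact ⟨_, mem_cons_self, hab⟩
    · obtain ⟨a, ha, h⟩ := ih hb
      exact ⟨a, mem_cons_of_mem _ ha, h⟩

theorem planCost_eq_of_forall₂ {R : StripsAction α → StripsAction α → Prop}
    (hR : ∀ a' a, R a' a → a'.cost = a.cost) {π' π : List (StripsAction α)}
    (h : Forall₂ R π' π) : planCost π' = planCost π := by
  unfold planCost
  congr 1
  rw [← forall₂_eq_eq_eq, forall₂_map_left_iff, forall₂_map_right_iff]
  exact h.imp hR

theorem mem_seqResult_iff_of_untouched {g : α} :
    ∀ {μ : List (StripsAction α)} {s : Set α}, (∀ b ∈ μ, g ∉ b.add ∪ b.del) →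
      (g ∈ seqResult s μ ↔ g ∈ s)
  | [], _, _ => Iff.rfl
  | a :: μ, s, h => by
    rw [seqResult, mem_seqResult_iff_of_untouched fun b hb => h b (mem_cons_of_mem _ hb)]
    have ha := h a mem_cons_self
    simp only [StripsAction.apply, mem_union, mem_sdiff] at ha ⊢
    tauto

theorem SeqApplicable.of_simulation {R : StripsAction α → StripsAction α → Prop}
    {P : Set α → Prop} {f : Set α → Set α}
    (step : ∀ a' a s, R a' a → P s → a'.Applicable s →
      a.Applicable (f s) ∧ f (a'.apply s) = a.apply (f s) ∧ P (a'.apply s))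
    {π' π : List (StripsAction α)} (hR : Forall₂ R π' π) :
    ∀ {s : Set α}, P s → SeqApplicable s π' →
      SeqApplicable (f s) π ∧ f (seqResult s π') = seqResult (f s) π ∧ P (seqResult s π') := by
  induction hR with
  | nil => exact fun hP _ => ⟨trivial, rfl, hP⟩
  | cons hR _ ih =>
    rintro s hP ⟨happ, happs⟩
    obtain ⟨happ₀, hf, hP₀⟩ := step _ _ s hR hP happ
    obtain ⟨h₁, h₂, h₃⟩ := ih hP₀ happs
    rw [hf] at h₁ h₂
    exact ⟨⟨happ₀, h₁⟩, h₂, h₃⟩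

section Compilation

variable {commit : α → α} {Gbar : Set α} {a : StripsAction α}

theorem simAction_eq_commitAction (h : a.del ∩ Gbar = ∅) (i : Set α) :
    simAction commit Gbar a i = commitAction commit a i := by
  simp [commitAction, simAction, h]

theorem forceCommitAction_eq_simAction :
    forceCommitAction commit Gbar a = simAction commit Gbar a ∅ := by
  simp [forceCommitAction, simAction]

theorem simAction_empty_eq_self (h : a.del ∩ Gbar = ∅) : simAction commit Gbar a ∅ = a := by
  cases a
  simp_all [simAction]

theorem compiledFrom_iff {T : StripsTask α} {a' : StripsAction α} :
    CompiledFrom T commit a' a ↔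
      a ∈ T.A ∧ ∃ j ⊆ a.add ∩ pending T, a' = simAction commit (pending T) a j := by
  unfold CompiledFrom
  refine and_congr_right fun _ => ?_
  by_cases hadd : a.add ∩ pending T = ∅ <;> by_cases hdel : a.del ∩ pending T = ∅
  · simp [hadd, hdel, simAction_empty_eq_self hdel]
  · simp [hadd, hdel, forceCommitAction_eq_simAction]
  · simp [hadd, hdel, simAction_eq_commitAction hdel]
  · simp [hadd, hdel]

theorem CompiledFrom.cost_eq {T : StripsTask α} {a' : StripsAction α}
    (h : CompiledFrom T commit a' a) : a'.cost = a.cost := by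
  obtain ⟨-, j, -, rfl⟩ := compiledFrom_iff.1 h
  rfl

end Compilation

section Backward

variable {T : StripsTask α} {commit : α → α} {Gbar j s : Set α} {a : StripsAction α}

def CommitsHold (T : StripsTask α) (commit : α → α) (s : Set α) : Prop :=
  ∀ g ∈ pending T, commit g ∈ s → g ∈ s

theorem StripsAction.Applicable.inter_of_simAction {F : Set α} (hpre : a.prePos ⊆ F)
    (h : (simAction commit Gbar a j).Applicable s) : a.Applicable (s ∩ F) := by
  refine ⟨subset_inter h.1 hpre, eq_empty_of_subset_empty ?_⟩
  rw [← h.2]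
  exact inter_subset_inter (fun x hx => Or.inl (Or.inl hx)) inter_subset_left

theorem simAction_apply_inter {F : Set α} (hadd : a.add ⊆ F) (hj : ∀ g ∈ j, commit g ∉ F) :
    (simAction commit Gbar a j).apply s ∩ F = a.apply (s ∩ F) := by
  ext x
  have hjF : x ∈ commit '' j → x ∉ F := by
    rintro ⟨g, hg, rfl⟩
    exact hj g hg
  have haF : x ∈ a.add → x ∈ F := @hadd x
  simp only [StripsAction.apply, simAction, mem_inter_iff, mem_union, mem_sdiff] at hjF ⊢
  tauto

theorem CommitsHold.simAction_apply (hfresh : FreshCommit T commit) (hadd : a.add ⊆ T.F)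
    (hj : j ⊆ a.add ∩ pending T) (happ : (simAction commit (pending T) a j).Applicable s)
    (hs : CommitsHold T commit s) :
    CommitsHold T commit ((simAction commit (pending T) a j).apply s) := by
  rintro g hg (⟨hgs, -⟩ | hgadd | ⟨g', hg', hgg'⟩)
  · -- `g` cannot be deleted here: the negative precondition forbids `g-commit`.
    refine Or.inl ⟨hs g hg hgs, fun hgdel => ?_⟩
    exact (eq_empty_iff_forall_notMem.1 happ.2) _ ⟨Or.inr ⟨g, ⟨hgdel, hg⟩, rfl⟩, hgs⟩
  · exact absurd (hadd hgadd) (hfresh.2 g hg)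
  · rw [hfresh.1 (hj hg').2 hg hgg'] at hg'
    exact Or.inr (Or.inl (hj hg').1)

theorem isPlan_of_forall₂_compiledFrom (hwf : T.WellFormed) (hfresh : FreshCommit T commit)
    {π' π : List (StripsAction α)} (hπ' : (commitTask T commit).IsPlan π')
    (hR : Forall₂ (CompiledFrom T commit) π' π) : T.IsPlan π := by
  obtain ⟨-, happ', hgoal'⟩ := hπ'
  obtain ⟨-, -, hIF, hGF, hact⟩ := hwf
  have hI : CommitsHold T commit T.I := fun g hg hcg => absurd (hIF hcg) (hfresh.2 g hg)
  have step (a' a : StripsAction α) (s : Set α) (h : CompiledFrom T commit a' a)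
      (hs : CommitsHold T commit s) (happ : a'.Applicable s) :
      a.Applicable (s ∩ T.F) ∧ a'.apply s ∩ T.F = a.apply (s ∩ T.F) ∧
        CommitsHold T commit (a'.apply s) := by
    obtain ⟨ha, j, hj, rfl⟩ := compiledFrom_iff.1 h
    obtain ⟨hpre, -, hadd, -⟩ := hact a ha
    exact ⟨happ.inter_of_simAction hpre,
      simAction_apply_inter hadd fun g hg => hfresh.2 g (hj hg).2,
      hs.simAction_apply hfresh hadd hj happ⟩
  obtain ⟨happ, hres, hholds⟩ := SeqApplicable.of_simulation step hR hI happ'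
  rw [inter_eq_left.2 hIF] at happ hres
  refine ⟨fun a ha => ?_, happ, fun g hg => hres ▸ ⟨?_, hGF hg⟩⟩
  · obtain ⟨a', -, h⟩ := hR.exists_of_mem_right ha
    exact h.1
  by_cases hgp : g ∈ pending T
  · exact hholds g hgp (hgoal' (Or.inr ⟨g, hgp, rfl⟩))
  · exact hgoal' (Or.inl ⟨hg, hgp⟩)

end Backward

section Forward

variable {T : StripsTask α} {commit : α → α} {Gbar j s C : Set α} {a : StripsAction α}

def lastAchieved (T : StripsTask α) (a : StripsAction α) (μ : List (StripsAction α)) : Set α :=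
  {g ∈ a.add ∩ pending T | ∀ b ∈ μ, g ∉ b.add ∪ b.del}

def compilePlan (T : StripsTask α) (commit : α → α) :
    List (StripsAction α) → List (StripsAction α)
  | [] => []
  | a :: μ => simAction commit (pending T) a (lastAchieved T a μ) :: compilePlan T commit μ

def committedGoals (T : StripsTask α) : List (StripsAction α) → Set α
  | [] => ∅
  | a :: μ => lastAchieved T a μ ∪ committedGoals T μ

theorem forall₂_compiledFrom_compilePlan :
    ∀ {μ : List (StripsAction α)}, (∀ a ∈ μ, a ∈ T.A) →
      Forall₂ (CompiledFrom T commit) (compilePlan T commit μ) μ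
  | [], _ => .nil
  | a :: _, hμ => .cons (compiledFrom_iff.2 ⟨hμ a mem_cons_self, _, sep_subset _ _, rfl⟩)
      (forall₂_compiledFrom_compilePlan fun b hb => hμ b (mem_cons_of_mem _ hb))

theorem simAction_apply_union (hfresh : FreshCommit T commit) (hdel : a.del ⊆ T.F)
    (hC : C ⊆ pending T) :
    (simAction commit Gbar a j).apply (s ∪ commit '' C) = a.apply s ∪ commit '' (C ∪ j) := by
  ext x
  have hCdel : x ∈ commit '' C → x ∉ a.del := by
    rintro ⟨g, hg, rfl⟩ hx
    exact hfresh.2 g (hC hg) (hdel hx)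
  simp only [StripsAction.apply, simAction, image_union, mem_union, mem_sdiff]
  tauto

theorem StripsAction.Applicable.simAction_union (hfresh : FreshCommit T commit)
    (hneg : a.preNeg ⊆ T.F) (happ : a.Applicable s) (hsF : s ⊆ T.F) (hC : C ⊆ pending T)
    (hCa : ∀ g ∈ C, g ∉ a.add ∪ a.del) (hj : j ⊆ a.add ∩ pending T) :
    (simAction commit (pending T) a j).Applicable (s ∪ commit '' C) := by
  refine ⟨happ.1.trans subset_union_left, eq_empty_iff_forall_notMem.2 ?_⟩
  have hs : ∀ g ∈ pending T, commit g ∉ s := fun g hg h => hfresh.2 g hg (hsF h)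
  have hCeq {g c : α} (hg : g ∈ pending T) (hc : c ∈ C) (h : commit c = commit g) : g ∈ C :=
    hfresh.1 (hC hc) hg h ▸ hc
  rintro x ⟨(hx | ⟨g, hg, rfl⟩) | ⟨g, hg, rfl⟩, hxs | ⟨c, hc, hcx⟩⟩
  · exact (eq_empty_iff_forall_notMem.1 happ.2) x ⟨hx, hxs⟩
  · exact hfresh.2 c (hC hc) (hcx ▸ hneg hx)
  · exact hs g (hj hg).2 hxs
  · exact hCa g (hCeq (hj hg).2 hc hcx) (Or.inl (hj hg).1)
  · exact hs g hg.2 hxs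
  · exact hCa g (hCeq hg.2 hc hcx) (Or.inr hg.1)

theorem compilePlan_run (hwf : T.WellFormed) (hfresh : FreshCommit T commit) :
    ∀ {μ : List (StripsAction α)} {s C : Set α}, (∀ a ∈ μ, a ∈ T.A) → s ⊆ T.F →
      C ⊆ pending T → (∀ g ∈ C, ∀ b ∈ μ, g ∉ b.add ∪ b.del) → SeqApplicable s μ →
      SeqApplicable (s ∪ commit '' C) (compilePlan T commit μ) ∧
        seqResult (s ∪ commit '' C) (compilePlan T commit μ) =
          seqResult s μ ∪ commit '' (C ∪ committedGoals T μ)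
  | [], _, _, _, _, _, _, _ => ⟨trivial, by simp [compilePlan, committedGoals, seqResult]⟩
  | a :: μ, s, C, hμ, hsF, hC, hCμ, ⟨happ, happs⟩ => by
    obtain ⟨-, hneg, hadd, hdel, -⟩ := hwf.2.2.2.2 a (hμ a mem_cons_self)
    have hj : lastAchieved T a μ ⊆ a.add ∩ pending T := sep_subset _ _
    have hstep := simAction_apply_union (s := s) (j := lastAchieved T a μ) (Gbar := pending T)
      hfresh hdel hC
    have hCμ' : ∀ g ∈ C ∪ lastAchieved T a μ, ∀ b ∈ μ, g ∉ b.add ∪ b.del := by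
      rintro g (hg | hg) b hb
      exacts [hCμ g hg b (mem_cons_of_mem _ hb), hg.2 b hb]
    obtain ⟨ih_app, ih_res⟩ := compilePlan_run hwf hfresh (s := a.apply s)
      (fun b hb => hμ b (mem_cons_of_mem _ hb)) (union_subset (sdiff_subset.trans hsF) hadd)
      (union_subset hC (hj.trans inter_subset_right)) hCμ' happs
    refine ⟨⟨happ.simAction_union hfresh hneg hsF hC (fun g hg => hCμ g hg a mem_cons_self) hj,
      hstep ▸ ih_app⟩, ?_⟩
    rw [compilePlan, seqResult, hstep, ih_res, union_assoc]
    rfl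

theorem mem_committedGoals {g : α} (hg : g ∈ pending T) :
    ∀ {μ : List (StripsAction α)} {s : Set α}, g ∈ seqResult s μ →
      (∃ b ∈ μ, g ∈ b.add ∪ b.del) → g ∈ committedGoals T μ
  | [], _, _, ⟨_, hb, _⟩ => absurd hb not_mem_nil
  | a :: μ, s, hgμ, ⟨b, hb, hgb⟩ => by
    by_cases htouched : ∃ b ∈ μ, g ∈ b.add ∪ b.del
    · exact Or.inr (mem_committedGoals hg hgμ htouched)
    push Not at htouched
    have hga : g ∈ a.apply s := (mem_seqResult_iff_of_untouched htouched).1 hgμ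
    have hta : g ∈ a.add ∪ a.del := by
      rcases mem_cons.1 hb with rfl | hb
      exacts [hgb, absurd hgb (htouched b hb)]
    refine Or.inl ⟨⟨?_, hg⟩, htouched⟩
    rcases hga with ⟨-, hgdel⟩ | hgadd
    exacts [hta.resolve_right hgdel, hgadd]

theorem isPlan_compilePlan (hwf : T.WellFormed) (hfresh : FreshCommit T commit)
    {μ : List (StripsAction α)} (hμ : T.IsPlan μ) :
    (commitTask T commit).IsPlan (compilePlan T commit μ) := by
  obtain ⟨hA, happ, hgoal⟩ := hμ
  obtain ⟨happ', hres'⟩ := compilePlan_run hwf hfresh (C := ∅) hA hwf.2.2.1 (empty_subset _)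
    (by simp) happ
  simp only [image_empty, union_empty, empty_union] at happ' hres'
  refine ⟨fun a' ha' => ?_, happ', hres' ▸ ?_⟩
  · obtain ⟨a, -, h⟩ := (forall₂_compiledFrom_compilePlan hA).exists_of_mem_left ha'
    exact ⟨a, h⟩
  rintro x (⟨hxG, -⟩ | ⟨g, hg, rfl⟩)
  · exact Or.inl (hgoal hxG)
  refine Or.inr ⟨g, mem_committedGoals hg (hgoal hg.1.1) ?_, rfl⟩
  by_contra! huntouched
  exact hg.1.2 ((mem_seqResult_iff_of_untouched huntouched).1 (hgoal hg.1.1))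

end Forward

/-- Backward optimality preservation: if `π'` optimally solves `P_c`, then the mapped
sequence `ρ(π')` optimally solves `P`. -/
theorem commit_compilation_backward_optimal {α : Type*} (T : StripsTask α) (commit : α → α)
    (hwf : T.WellFormed) (hfresh : FreshCommit T commit)
    (π' π : List (StripsAction α)) (hopt : (commitTask T commit).OptimalPlan π')
    (hmap : List.Forall₂ (CompiledFrom T commit) π' π) :
    T.OptimalPlan π := by
  obtain ⟨hπ', hmin⟩ := hopt
  have hcost {π' π : List (StripsAction α)} (h : Forall₂ (CompiledFrom T commit) π' π) :
      planCost π' = planCost π :=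
    planCost_eq_of_forall₂ (fun _ _ => CompiledFrom.cost_eq) h
  refine ⟨isPlan_of_forall₂_compiledFrom hwf hfresh hπ' hmap, fun π₂ hπ₂ => ?_⟩
  calc planCost π = planCost π' := (hcost hmap).symm
    _ ≤ planCost (compilePlan T commit π₂) := hmin _ (isPlan_compilePlan hwf hfresh hπ₂)
    _ = planCost π₂ := hcost (forall₂_compiledFrom_compilePlan hπ₂.1)
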